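/- arXiv:1508.00142 — 6 statements merged into one kernel-verified Lean document; each statement's English description precedes it below -/
import Mathlib

section
/- Let N be a finite ground set, b, c ∈ [0,1], and for each e ∈ N let each element be independently active with probability at most b (i.e., consider a random set R ⊆ N with independent memberships, Pr[e ∈ R] ≤ b). For a knapsack constraint with n elements of sizes s_1 = ... = s_{n-1} = 1/n, s_n = 1, and input vector x_1 = ... = x_{n-1} = b, x_n = b/n, any deterministic down-closed family F_x ⊆ 2^N whose sets all satisfy the knapsack constraint, and in which every singleton appears, satisfies: Pr[I ∪ {n} ∈ F_x for all I ⊆ R(x), I ∈ F_x] ≤ (1-b)^{n-1}, where R(x) contains each element e independently with probability x_e. Consequently, no deterministic greedy OCRS for this knapsack polytope is (b,c)-selectable for any c > (1-b)^{n-1}. -/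
/-- The probability that an independent-membership random subset (where element `e`
is included with probability `x e`) equals exactly `A`. -/
noncomputable def setProb {α : Type*} [Fintype α] [DecidableEq α]
    (x : α → ℝ) (A : Finset α) : ℝ :=
  (∏ e ∈ A, x e) * ∏ e ∈ Aᶜ, (1 - x e)

open Classical in
/-- The probability that the random set `R(x)` satisfies the predicate `E`. -/
noncomputable def prSet {α : Type*} [Fintype α] [DecidableEq α]
    (x : α → ℝ) (E : Finset α → Prop) : ℝ :=
  ∑ A : Finset α, if E A then setProb x A else 0

/-! If the big element can be added to every feasible subset of `R(x)`, then `R(x)` contains no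
small element `e`: `{e}` is feasible but `{e, big}` has size `1 + 1/(m+1) > 1`. Hence the event
lies inside `{R(x) ⊆ {big}}`, whose probability is the chance `(1 - b)^m` that no small element
is active. -/

section IndependentRandomSet

variable {α : Type*} [Fintype α] [DecidableEq α] (x : α → ℝ)

lemma setProb_nonneg (hx0 : ∀ e, 0 ≤ x e) (hx1 : ∀ e, x e ≤ 1) (A : Finset α) :
    0 ≤ setProb x A :=
  mul_nonneg (Finset.prod_nonneg fun e _ => hx0 e)
    (Finset.prod_nonneg fun e _ => sub_nonneg.2 (hx1 e))

lemma prSet_mono (hx0 : ∀ e, 0 ≤ x e) (hx1 : ∀ e, x e ≤ 1) {E E' : Finset α → Prop}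
    (h : ∀ A, E A → E' A) : prSet x E ≤ prSet x E' := by
  unfold prSet
  refine Finset.sum_le_sum fun A _ => ?_
  by_cases hA : E A
  · simp only [hA, h A hA, if_true, le_refl]
  · simp only [hA, if_false]
    split_ifs
    exacts [setProb_nonneg x hx0 hx1 A, le_rfl]

lemma setProb_of_subset {S A : Finset α} (hA : A ⊆ S) :
    setProb x A = (∏ e ∈ A, x e) * (∏ e ∈ S \ A, (1 - x e)) * ∏ e ∈ Sᶜ, (1 - x e) := by
  have hcompl : Aᶜ = (S \ A) ∪ Sᶜ := by
    ext e
    simp only [Finset.mem_compl, Finset.mem_union, Finset.mem_sdiff]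
    have := @hA e
    tauto
  rw [setProb, hcompl, Finset.prod_union (Finset.disjoint_left.2 fun e he => by
    simpa using (Finset.mem_sdiff.1 he).1), mul_assoc]

/-- Summing the product formula over the subsets of `S` factors the coordinates of `S` out. -/
lemma prSet_subset (S : Finset α) :
    prSet x (· ⊆ S) = ∏ e ∈ Sᶜ, (1 - x e) := by
  have hfilter : Finset.univ.filter (· ⊆ S) = S.powerset := by
    ext A; simp
  calc prSet x (· ⊆ S) = ∑ A ∈ S.powerset, setProb x A := by
        rw [prSet, ← hfilter, Finset.sum_filter]
        exact Finset.sum_congr rfl fun A _ => by congr -- `prSet` decides `A ⊆ S` classically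
    _ = (∑ A ∈ S.powerset, (∏ e ∈ A, x e) * ∏ e ∈ S \ A, (1 - x e)) * ∏ e ∈ Sᶜ, (1 - x e) := by
        rw [Finset.sum_mul]
        exact Finset.sum_congr rfl fun A hA => setProb_of_subset x (Finset.mem_powerset.1 hA)
    _ = ∏ e ∈ Sᶜ, (1 - x e) := by
        rw [← Finset.prod_add]
        simp

end IndependentRandomSet

lemma subset_singleton_of_forall_insert {α : Type*} [DecidableEq α] (s : α → ℝ)
    (F : Finset α → Prop) (hfeas : ∀ I, F I → ∑ e ∈ I, s e ≤ 1) (hsing : ∀ e, F {e})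
    (a : α) (hbig : ∀ e ≠ a, 1 < s e + s a) {A : Finset α}
    (hA : ∀ I ⊆ A, F I → F (insert a I)) : A ⊆ {a} := by
  intro e he
  by_contra hea
  rw [Finset.mem_singleton] at hea
  have hpair := hfeas _ (hA {e} (Finset.singleton_subset_iff.2 he) (hsing e))
  rw [Finset.sum_insert (by simpa using Ne.symm hea), Finset.sum_singleton] at hpair
  linarith [hbig e hea]

theorem stmt3_general (m : ℕ) (b : ℝ) (hb : b ∈ Set.Icc (0 : ℝ) 1)
    (s : Fin (m+1) → ℝ)
    (hs_small : ∀ i : Fin (m+1), i ≠ Fin.last m → s i = 1 / (m+1))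
    (hs_big : s (Fin.last m) = 1)
    (x : Fin (m+1) → ℝ)
    (hx_small : ∀ i : Fin (m+1), i ≠ Fin.last m → x i = b)
    (hx_big : x (Fin.last m) = b / (m+1))
    (F : Finset (Fin (m+1)) → Prop)
    (hfeas : ∀ I, F I → ∑ e ∈ I, s e ≤ 1)
    (hsing : ∀ e, F {e}) :
    prSet x (fun A => ∀ I ⊆ A, F I → F (insert (Fin.last m) I)) ≤ (1 - b) ^ m ∧
    ∀ c : ℝ, c ≤ prSet x (fun A => ∀ I ⊆ A, F I → F (insert (Fin.last m) I)) →
      c ≤ (1 - b) ^ m := by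
  obtain ⟨hb0, hb1⟩ := hb
  have hx_mem : ∀ e, 0 ≤ x e ∧ x e ≤ 1 := by
    intro e
    by_cases he : e = Fin.last m
    · rw [he, hx_big]
      exact ⟨by positivity, div_le_one_of_le₀ (by linarith [(m.cast_nonneg : (0:ℝ) ≤ m)])
        (by positivity)⟩
    · rw [hx_small e he]
      exact ⟨hb0, hb1⟩
  have hbig : ∀ e ≠ Fin.last m, 1 < s e + s (Fin.last m) := fun e he => by
    rw [hs_small e he, hs_big]
    linarith [show (0:ℝ) < 1 / (m + 1) by positivity]
  have hbound : prSet x (fun A => ∀ I ⊆ A, F I → F (insert (Fin.last m) I)) ≤ (1 - b) ^ m := by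
    calc _ ≤ prSet x (· ⊆ {Fin.last m}) := prSet_mono x (fun e => (hx_mem e).1)
            (fun e => (hx_mem e).2) fun A =>
            subset_singleton_of_forall_insert s F hfeas hsing _ hbig
      _ = ∏ e ∈ {Fin.last m}ᶜ, (1 - x e) := prSet_subset x _
      _ = (1 - b) ^ m := by
        rw [Finset.prod_congr rfl fun e he => by
          rw [hx_small e (by simpa using he)], Finset.prod_const, Finset.card_compl]
        simp
  exact ⟨hbound, fun c hc => hc.trans hbound⟩

/-- for the knapsack instance with `m` small elements of size `1/(m+1)`
and one big element of size `1`, with input `x` equal to `b` on small elements and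
`b/(m+1)` on the big element, any deterministic down-closed family `F` of feasible
sets containing all singletons satisfies
`Pr[I ∪ {last} ∈ F for all I ⊆ R(x) with I ∈ F] ≤ (1-b)^m`;
consequently no deterministic greedy OCRS for this knapsack polytope is
`(b,c)`-selectable for `c > (1-b)^m`. -/
theorem stmt3 (m : ℕ) (hm : 1 ≤ m) (b : ℝ) (hb : b ∈ Set.Icc (0 : ℝ) 1)
    (s : Fin (m+1) → ℝ)
    (hs_small : ∀ i : Fin (m+1), i ≠ Fin.last m → s i = 1 / (m+1))
    (hs_big : s (Fin.last m) = 1)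
    (x : Fin (m+1) → ℝ)
    (hx_small : ∀ i : Fin (m+1), i ≠ Fin.last m → x i = b)
    (hx_big : x (Fin.last m) = b / (m+1))
    (F : Finset (Fin (m+1)) → Prop)
    (hdown : ∀ I J : Finset (Fin (m+1)), J ⊆ I → F I → F J)
    (hfeas : ∀ I, F I → ∑ e ∈ I, s e ≤ 1)
    (hsing : ∀ e, F {e}) :
    prSet x (fun A => ∀ I ⊆ A, F I → F (insert (Fin.last m) I)) ≤ (1 - b) ^ m ∧
    ∀ c : ℝ, c ≤ prSet x (fun A => ∀ I ⊆ A, F I → F (insert (Fin.last m) I)) →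
      c ≤ (1 - b) ^ m :=
  stmt3_general m b hb s hs_small hs_big x hx_small hx_big F hfeas hsing
end

section
/- Let M = (N, F) be a matroid with a chain of subsets ∅ = N_ℓ ⊊ N_{ℓ-1} ⊊ ... ⊊ N_1 ⊊ N_0 = N. If for each i, I_i is an independent set of the matroid (M/N_{i+1})|_{N_i} (M contracted by N_{i+1} and restricted to N_i), then the union ∪_i I_i is independent in M. -/
/-- given a matroid rank function and a chain
`∅ = N_ℓ ⊊ N_{ℓ-1} ⊊ ... ⊊ N_1 ⊊ N_0 = N`, if each `I i` is independent in the
matroid `(M/N_{i+1})|_{N_i}` (i.e. `I i ⊆ N_i \ N_{i+1}` and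
`rank(I i ∪ N_{i+1}) = |I i| + rank(N_{i+1})`), then `⋃ i I i` is independent in `M`. -/
theorem stmt6 {α : Type*} [Fintype α] [DecidableEq α]
    (rank : Finset α → ℕ)
    (hcard : ∀ T : Finset α, rank T ≤ T.card)
    (hmono : ∀ S T : Finset α, S ⊆ T → rank S ≤ rank T)
    (hsubmod : ∀ S T : Finset α, rank (S ∪ T) + rank (S ∩ T) ≤ rank S + rank T)
    (ℓ : ℕ) (Nf : ℕ → Finset α)
    (h0 : Nf 0 = Finset.univ) (hℓ : Nf ℓ = ∅)
    (hchain : ∀ i < ℓ, Nf (i + 1) ⊂ Nf i)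
    (I : ℕ → Finset α)
    (hIsub : ∀ i < ℓ, I i ⊆ Nf i \ Nf (i + 1))
    (hIind : ∀ i < ℓ, rank (I i ∪ Nf (i + 1)) = (I i).card + rank (Nf (i + 1))) :
    rank ((Finset.range ℓ).biUnion I) = ((Finset.range ℓ).biUnion I).card := by
  have hrank0 : rank ∅ = 0 := Nat.le_zero.mp (by simpa using hcard ∅)
  have hNmono : ∀ i j : ℕ, i ≤ j → j ≤ ℓ → Nf j ⊆ Nf i := by
    intro i j hij hjl
    induction j with
    | zero =>
      have : i = 0 := Nat.le_zero.mp hij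
      subst this; exact subset_rfl
    | succ n ih =>
      rcases Nat.lt_or_ge i (n + 1) with h | h
      · have h1 : Nf (n + 1) ⊆ Nf n := (hchain n (by omega)).subset
        exact h1.trans (ih (by omega) (by omega))
      · have : i = n + 1 := le_antisymm hij h
        subst this; exact subset_rfl
  have hIN : ∀ i < ℓ, ∀ x ∈ I i, x ∈ Nf i ∧ x ∉ Nf (i + 1) := by
    intro i hi x hx
    have := hIsub i hi hx
    simpa [Finset.mem_sdiff] using this
  have key : ∀ k, k ≤ ℓ →
      rank ((Finset.range k).biUnion I ∪ Nf k)
        = ((Finset.range k).biUnion I).card + rank (Nf k) := by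
    intro k
    induction k with
    | zero => simp
    | succ n ih =>
      intro hk
      have hn : n < ℓ := hk
      set J := (Finset.range n).biUnion I with hJ
      have hJN : ∀ x ∈ J, x ∉ Nf n := by
        intro x hx
        simp only [hJ, Finset.mem_biUnion, Finset.mem_range] at hx
        obtain ⟨i, hi, hxi⟩ := hx
        have hx2 := (hIN i (by omega) x hxi).2
        intro hxn
        exact hx2 (hNmono (i + 1) n (by omega) (by omega) hxn)
      have hIk : ∀ x ∈ I n, x ∈ Nf n ∧ x ∉ Nf (n + 1) := fun x hx => hIN n hn x hx
      have hset1 : (Finset.range (n + 1)).biUnion I = J ∪ I n := by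
        rw [Finset.range_add_one, Finset.biUnion_insert, Finset.union_comm]
      have hdisj : Disjoint J (I n) := by
        rw [Finset.disjoint_left]
        intro x hx hx2
        exact hJN x hx (hIk x hx2).1
      have hcardJ : (J ∪ I n).card = J.card + (I n).card :=
        Finset.card_union_of_disjoint hdisj
      have hST : (J ∪ I n ∪ Nf (n + 1)) ∪ Nf n = J ∪ Nf n := by
        ext x
        simp only [Finset.mem_union]
        constructor
        · rintro (((h | h) | h) | h)
          · exact Or.inl h
          · exact Or.inr (hIk x h).1
          · exact Or.inr (hNmono n (n + 1) (by omega) (by omega) h)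
          · exact Or.inr h
        · rintro (h | h)
          · exact Or.inl (Or.inl (Or.inl h))
          · exact Or.inr h
      have hSiT : (J ∪ I n ∪ Nf (n + 1)) ∩ Nf n = I n ∪ Nf (n + 1) := by
        ext x
        simp only [Finset.mem_inter, Finset.mem_union]
        constructor
        · rintro ⟨(h | h) | h, hx⟩
          · exact absurd hx (hJN x h)
          · exact Or.inl h
          · exact Or.inr h
        · rintro (h | h)
          · exact ⟨Or.inl (Or.inr h), (hIk x h).1⟩
          · exact ⟨Or.inr h, hNmono n (n + 1) (by omega) (by omega) h⟩
      have hsm := hsubmod (J ∪ I n ∪ Nf (n + 1)) (Nf n)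
      rw [hST, hSiT, hIind n hn, ih (by omega)] at hsm
      have hub : rank (J ∪ I n ∪ Nf (n + 1)) ≤ (J ∪ I n).card + rank (Nf (n + 1)) := by
        have h2 := hsubmod (J ∪ I n) (Nf (n + 1))
        have h3 := hcard (J ∪ I n)
        omega
      rw [hset1, hcardJ]
      omega
  have h := key ℓ le_rfl
  rw [hℓ, Finset.union_empty, hrank0, add_zero] at h
  exact h
end

section
/- Let g: 2^N → ℝ be a submodular function on a finite ground set N, let T ⊆ N, let p ∈ [0,1], and let T_p be a random subset of T such that Pr[e ∈ T_p] = p for every e ∈ T (memberships need not be independent). Then E[g(T_p)] ≥ (1-p)·g(∅) + p·g(T). -/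
/-- For a submodular `g` there are weights `w` giving a linear lower bound on `g`
over subsets of `T`, tight at `∅` and `T`. -/
lemma stmt7_exists_w {α : Type*} [DecidableEq α]
    (g : Finset α → ℝ)
    (hsubmod : ∀ A B : Finset α, g (A ∪ B) + g (A ∩ B) ≤ g A + g B)
    (T : Finset α) :
    ∃ w : α → ℝ, (g ∅ + ∑ e ∈ T, w e = g T) ∧
      ∀ A ⊆ T, g ∅ + ∑ e ∈ A, w e ≤ g A := by
  induction T using Finset.induction_on with
  | empty =>
    refine ⟨0, by simp, fun A hA => ?_⟩
    simp [Finset.subset_empty.mp hA]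
  | @insert a T ha ih =>
    obtain ⟨w, hw1, hw2⟩ := ih
    refine ⟨Function.update w a (g (insert a T) - g T), ?_, ?_⟩
    · rw [Finset.sum_insert ha]
      have : ∑ e ∈ T, Function.update w a (g (insert a T) - g T) e = ∑ e ∈ T, w e := by
        apply Finset.sum_congr rfl
        intro e he
        exact Function.update_of_ne (by rintro rfl; exact ha he) _ _
      rw [this, Function.update_self]
      linarith
    · intro A hA
      by_cases haA : a ∈ A
      · have hA' : A.erase a ⊆ T := Finset.subset_insert_iff.mp hA
        have h1 := hw2 (A.erase a) hA'
        have hAeq : A = insert a (A.erase a) := (Finset.insert_erase haA).symm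
        have hsum : ∑ e ∈ A, Function.update w a (g (insert a T) - g T) e
            = (g (insert a T) - g T) + ∑ e ∈ A.erase a, w e := by
          rw [hAeq, Finset.sum_insert (Finset.notMem_erase a _), Function.update_self,
            Finset.erase_insert (Finset.notMem_erase a A)]
          congr 1
          apply Finset.sum_congr rfl
          intro e he
          exact Function.update_of_ne (Finset.ne_of_mem_erase he) _ _
        rw [hsum]
        have hunion : A ∪ T = insert a T := by
          apply Finset.Subset.antisymm
          · exact Finset.union_subset hA (Finset.subset_insert a T)
          · intro x hx
            rcases Finset.mem_insert.mp hx with h | h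
            · exact Finset.mem_union_left _ (h ▸ haA)
            · exact Finset.mem_union_right _ h
        have hinter : A ∩ T = A.erase a := by
          ext x
          simp only [Finset.mem_inter, Finset.mem_erase]
          constructor
          · rintro ⟨hx1, hx2⟩
            exact ⟨fun h => ha (h ▸ hx2), hx1⟩
          · rintro ⟨hx1, hx2⟩
            rcases Finset.mem_insert.mp (hA hx2) with h | h
            · exact absurd h hx1
            · exact ⟨hx2, h⟩
        have hs := hsubmod A T
        rw [hunion, hinter] at hs
        linarith
      · have hA' : A ⊆ T := by
          intro x hx
          rcases Finset.mem_insert.mp (hA hx) with h | h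
          · exact absurd (h ▸ hx) haA
          · exact h
        have : ∑ e ∈ A, Function.update w a (g (insert a T) - g T) e = ∑ e ∈ A, w e := by
          apply Finset.sum_congr rfl
          intro e he
          exact Function.update_of_ne (by rintro rfl; exact ha (hA' he)) _ _
        rw [this]
        exact hw2 A hA'

/-- Lemma 2.2 of Feige–Mirrokni–Vondrák: for a submodular `g`,
a set `T`, and a random subset `T_p ⊆ T` (distribution `μ`) whose marginals all
equal `p`, one has `E[g(T_p)] ≥ (1-p)·g(∅) + p·g(T)`. -/
theorem stmt7 {α : Type*} [Fintype α] [DecidableEq α]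
    (g : Finset α → ℝ)
    (hsubmod : ∀ A B : Finset α, g (A ∪ B) + g (A ∩ B) ≤ g A + g B)
    (T : Finset α) (p : ℝ) (hp : p ∈ Set.Icc (0 : ℝ) 1)
    (μ : Finset α → ℝ) (hμ0 : ∀ A, 0 ≤ μ A) (hμ1 : ∑ A : Finset α, μ A = 1)
    (hsupp : ∀ A : Finset α, μ A ≠ 0 → A ⊆ T)
    (hmarg : ∀ e ∈ T, (∑ A : Finset α, if e ∈ A then μ A else 0) = p) :
    (1 - p) * g ∅ + p * g T ≤ ∑ A : Finset α, μ A * g A := by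
  obtain ⟨w, hw1, hw2⟩ := stmt7_exists_w g hsubmod T
  -- pointwise bound
  have key : ∀ A : Finset α,
      μ A * (g ∅ + ∑ e ∈ T, (if e ∈ A then w e else 0)) ≤ μ A * g A := by
    intro A
    by_cases h : μ A = 0
    · simp [h]
    · have hsub := hsupp A h
      have hsum : ∑ e ∈ T, (if e ∈ A then w e else 0) = ∑ e ∈ A, w e := by
        rw [Finset.sum_ite_mem, Finset.inter_eq_right.mpr hsub]
      rw [hsum]
      exact mul_le_mul_of_nonneg_left (hw2 A hsub) (hμ0 A)
  have h2 : ∑ A : Finset α, μ A * (g ∅ + ∑ e ∈ T, (if e ∈ A then w e else 0))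
      = (1 - p) * g ∅ + p * g T := by
    have hswap : ∑ A : Finset α, μ A * (∑ e ∈ T, (if e ∈ A then w e else 0))
        = ∑ e ∈ T, ∑ A : Finset α, μ A * (if e ∈ A then w e else 0) := by
      simp_rw [Finset.mul_sum]
      exact Finset.sum_comm
    have hinner : ∀ e ∈ T,
        (∑ A : Finset α, μ A * (if e ∈ A then w e else 0)) = p * w e := by
      intro e he
      have : ∀ A : Finset α, μ A * (if e ∈ A then w e else 0)
          = (if e ∈ A then μ A else 0) * w e := by
        intro A; split <;> simp
      simp_rw [this]
      rw [← Finset.sum_mul, hmarg e he]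
    have hT : ∑ e ∈ T, w e = g T - g ∅ := by linarith
    calc ∑ A : Finset α, μ A * (g ∅ + ∑ e ∈ T, (if e ∈ A then w e else 0))
        = (∑ A : Finset α, μ A) * g ∅
          + ∑ A : Finset α, μ A * (∑ e ∈ T, (if e ∈ A then w e else 0)) := by
          simp_rw [mul_add]
          rw [Finset.sum_add_distrib, Finset.sum_mul]
      _ = 1 * g ∅ + ∑ e ∈ T, p * w e := by
          rw [hμ1, hswap, Finset.sum_congr rfl hinner]
      _ = (1 - p) * g ∅ + p * g T := by
          rw [← Finset.mul_sum, hT]; ring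
  calc (1 - p) * g ∅ + p * g T
      = ∑ A : Finset α, μ A * (g ∅ + ∑ e ∈ T, (if e ∈ A then w e else 0)) := h2.symm
    _ ≤ ∑ A : Finset α, μ A * g A := Finset.sum_le_sum (fun A _ => key A)
end

section
/- Let g: 2^N → ℝ_{≥0} be a non-negative submodular function on a finite ground set N, let p ∈ [0,1], and let N_p be a random subset of N such that Pr[e ∈ N_p] ≤ p for every e ∈ N (memberships need not be independent). Then E[g(N_p)] ≥ (1-p)·g(∅). -/
open Finset

private lemma kstar {α : Type*} [DecidableEq α] :
    ∀ N : Finset α, ∀ g : Finset α → ℝ,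
      (∀ A B, g (A ∪ B) + g (A ∩ B) ≤ g A + g B) → ∀ t : ℝ, t ≤ g ∅ →
      ∃ y : α → ℝ, (∀ e, 0 ≤ y e) ∧ (∀ e, e ∉ N → y e = 0) ∧
        (∀ m : ℝ, (∀ A ∈ N.powerset, m ≤ g A) → ∑ e ∈ N, y e ≤ max (t - m) 0) ∧
        (∀ A ∈ N.powerset, t ≤ g A + ∑ e ∈ A, y e) := by
  intro N
  induction N using Finset.strongInduction with
  | _ N IH =>
    intro g hsub t ht
    by_cases hbase : ∀ A ∈ N.powerset, t ≤ g A
    · refine ⟨fun _ => 0, fun _ => le_rfl, fun _ _ => rfl, ?_, ?_⟩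
      · intro m _; simpa using le_max_right (t - m) 0
      · intro A hA; simpa using hbase A hA
    · push_neg at hbase
      obtain ⟨A₀, hA₀N, hA₀⟩ := hbase
      have hNne : N.Nonempty := by
        rcases N.eq_empty_or_nonempty with rfl | h
        · rw [mem_powerset, subset_empty] at hA₀N
          subst hA₀N; linarith
        · exact h
      have hPne : N.powerset.Nonempty := ⟨∅, by simp⟩
      set mN := N.powerset.inf' hPne g with hmNdef
      have hmN_le : ∀ A ∈ N.powerset, mN ≤ g A := fun A hA => inf'_le g hA
      have hmNlt : mN < t := lt_of_le_of_lt (hmN_le A₀ hA₀N) hA₀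
      set S := N.powerset.erase N with hSdef
      have hSne : S.Nonempty := ⟨∅, by
        rw [hSdef, mem_erase]
        exact ⟨Ne.symm hNne.ne_empty, by simp⟩⟩
      obtain ⟨A₂, hA₂S, hA₂min⟩ := S.exists_min_image g hSne
      have hA₂N : A₂ ⊆ N := mem_powerset.1 (mem_of_mem_erase hA₂S)
      have hA₂ne : A₂ ≠ N := (mem_erase.1 hA₂S).1
      have hss : A₂ ⊂ N := ssubset_of_subset_of_ne hA₂N hA₂ne
      obtain ⟨e₀, he₀N, he₀A₂⟩ := exists_of_ssubset hss
      have hproper : ∀ B, B ⊆ A₂ → B ∈ S := by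
        intro B hB
        rw [hSdef, mem_erase]
        refine ⟨?_, mem_powerset.2 (hB.trans hA₂N)⟩
        rintro rfl
        exact he₀A₂ (hB he₀N)
      have hm₂B : ∀ B, B ⊆ A₂ → g A₂ ≤ g B := fun B hB => hA₂min B (hproper B hB)
      by_cases hcase : t ≤ g A₂
      · -- single delta on e₀ with weight t - mN
        refine ⟨fun e => if e = e₀ then t - mN else 0, ?_, ?_, ?_, ?_⟩
        · intro e
          show (0:ℝ) ≤ if e = e₀ then t - mN else 0
          split
          · linarith
          · exact le_rfl
        · intro e heN
          show (if e = e₀ then t - mN else 0) = 0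
          rw [if_neg]
          rintro rfl; exact heN he₀N
        · intro m hm
          have hmmN : m ≤ mN := le_inf' hPne g hm
          rw [Finset.sum_ite_eq' N e₀ (fun _ => t - mN), if_pos he₀N]
          exact le_max_of_le_left (by linarith)
        · intro A hAN
          by_cases he₀A : e₀ ∈ A
          · rw [Finset.sum_ite_eq' A e₀ (fun _ => t - mN), if_pos he₀A]
            have := hmN_le A hAN
            linarith
          · rw [Finset.sum_ite_eq' A e₀ (fun _ => t - mN), if_neg he₀A]
            have hAS : A ∈ S := by
              rw [hSdef, mem_erase]
              refine ⟨?_, hAN⟩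
              rintro rfl; exact he₀A he₀N
            have := hA₂min A hAS
            linarith
      · push_neg at hcase
        have hA₂P : A₂ ∈ N.powerset := mem_of_mem_erase hA₂S
        have hc0 : 0 ≤ g A₂ - mN := by
          have := hmN_le A₂ hA₂P; linarith
        set c := g A₂ - mN with hcdef
        set g' : Finset α → ℝ := fun A => g A + (if e₀ ∈ A then c else 0) with hg'def
        have hsub' : ∀ A B, g' (A ∪ B) + g' (A ∩ B) ≤ g' A + g' B := by
          intro A B
          have h1 := hsub A B
          have h2 : ((if e₀ ∈ A ∪ B then c else 0) + (if e₀ ∈ A ∩ B then c else 0))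
              = (if e₀ ∈ A then c else 0) + (if e₀ ∈ B then c else 0) := by
            by_cases hA : e₀ ∈ A <;> by_cases hB : e₀ ∈ B <;> simp [hA, hB]
          simp only [hg'def]
          linarith
        have hg'B : ∀ B, B ⊆ A₂ → g' B = g B := by
          intro B hB
          simp only [hg'def]
          rw [if_neg (fun hh => he₀A₂ (hB hh)), add_zero]
        have ht' : t ≤ g' ∅ := by
          rw [hg'B ∅ (empty_subset _)]; exact ht
        obtain ⟨z, hz0, hzsupp, hzmass, hzcon⟩ := IH A₂ hss g' hsub' t ht'
        refine ⟨fun e => z e + (if e = e₀ then c else 0), ?_, ?_, ?_, ?_⟩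
        · intro e
          show (0:ℝ) ≤ z e + if e = e₀ then c else 0
          have : (0:ℝ) ≤ if e = e₀ then c else 0 := by
            split
            · exact hc0
            · exact le_rfl
          have := hz0 e
          linarith
        · intro e heN
          show z e + (if e = e₀ then c else 0) = 0
          rw [hzsupp e (fun hmem => heN (hA₂N hmem)), if_neg (by rintro rfl; exact heN he₀N),
            add_zero]
        · intro m hm
          have hmmN : m ≤ mN := le_inf' hPne g hm
          have hmass2 : ∑ e ∈ A₂, z e ≤ max (t - g A₂) 0 := by
            refine hzmass (g A₂) ?_
            intro B hB
            rw [hg'B B (mem_powerset.1 hB)]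
            exact hm₂B B (mem_powerset.1 hB)
          have hmax : max (t - g A₂) 0 = t - g A₂ := max_eq_left (by linarith)
          have hNz : ∑ e ∈ N, z e = ∑ e ∈ A₂, z e :=
            (Finset.sum_subset hA₂N (fun x _ hnx => hzsupp x hnx)).symm
          rw [Finset.sum_add_distrib, Finset.sum_ite_eq' N e₀ (fun _ => c), if_pos he₀N, hNz]
          rw [hmax] at hmass2
          exact le_max_of_le_left (by linarith)
        · intro A hAN
          have hAA₂ : A ∩ A₂ ∈ A₂.powerset := mem_powerset.2 inter_subset_right
          have h1 := hzcon _ hAA₂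
          have h2 : g' (A ∩ A₂) ≤ g' A := by
            have hs := hsub' A A₂
            have hu : g A₂ ≤ g' (A ∪ A₂) := by
              by_cases hu0 : e₀ ∈ A ∪ A₂
              · have hmle : mN ≤ g (A ∪ A₂) :=
                  hmN_le _ (mem_powerset.2 (union_subset (mem_powerset.1 hAN) hA₂N))
                simp only [hg'def, if_pos hu0]
                linarith
              · have hUS : A ∪ A₂ ∈ S := by
                  rw [hSdef, mem_erase]
                  refine ⟨?_, mem_powerset.2 (union_subset (mem_powerset.1 hAN) hA₂N)⟩
                  rintro rfl; exact hu0 he₀N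
                have := hA₂min _ hUS
                simp only [hg'def, if_neg hu0, add_zero]
                exact this
            have hA₂g' : g' A₂ = g A₂ := hg'B A₂ subset_rfl
            linarith
          have h3 : ∑ e ∈ A ∩ A₂, z e ≤ ∑ e ∈ A, z e :=
            Finset.sum_le_sum_of_subset_of_nonneg inter_subset_left (fun e _ _ => hz0 e)
          have h4 : ∑ e ∈ A, (z e + if e = e₀ then c else 0)
              = (∑ e ∈ A, z e) + (g' A - g A) := by
            rw [Finset.sum_add_distrib, Finset.sum_ite_eq' A e₀ (fun _ => c)]
            simp only [hg'def]
            ring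
          rw [h4]
          linarith

/-- Lemma 2.2 of Buchbinder–Feldman–Naor–Schwartz: for a non-negative
submodular `g` and a random subset `N_p` (distribution `μ`) whose marginals are all
at most `p`, one has `E[g(N_p)] ≥ (1-p)·g(∅)`. -/
theorem stmt8 {α : Type*} [Fintype α] [DecidableEq α]
    (g : Finset α → ℝ) (hnn : ∀ A, 0 ≤ g A)
    (hsubmod : ∀ A B : Finset α, g (A ∪ B) + g (A ∩ B) ≤ g A + g B)
    (p : ℝ) (hp : p ∈ Set.Icc (0 : ℝ) 1)
    (μ : Finset α → ℝ) (hμ0 : ∀ A, 0 ≤ μ A) (hμ1 : ∑ A : Finset α, μ A = 1)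
    (hmarg : ∀ e : α, (∑ A : Finset α, if e ∈ A then μ A else 0) ≤ p) :
    (1 - p) * g ∅ ≤ ∑ A : Finset α, μ A * g A := by
  obtain ⟨hp0, hp1⟩ := hp
  obtain ⟨y, hy0, -, hmass, hcon⟩ := kstar (univ : Finset α) g hsubmod (g ∅) le_rfl
  have hysum : ∑ e : α, y e ≤ g ∅ := by
    have h := hmass 0 (fun A _ => hnn A)
    rw [sub_zero, max_eq_left (hnn ∅)] at h
    exact h
  have key : ∀ A : Finset α, g ∅ - ∑ e ∈ A, y e ≤ g A := by
    intro A
    have := hcon A (mem_powerset.2 (subset_univ A))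
    linarith
  have step1 : ∑ A : Finset α, μ A * (g ∅ - ∑ e ∈ A, y e) ≤ ∑ A : Finset α, μ A * g A :=
    Finset.sum_le_sum fun A _ => mul_le_mul_of_nonneg_left (key A) (hμ0 A)
  have expand : ∑ A : Finset α, μ A * (g ∅ - ∑ e ∈ A, y e)
      = g ∅ - ∑ e : α, y e * ∑ A : Finset α, (if e ∈ A then μ A else 0) := by
    have h1 : ∀ A : Finset α, (∑ e ∈ A, y e) = ∑ e : α, (if e ∈ A then y e else 0) := by
      intro A
      rw [Finset.sum_ite_mem, univ_inter]
    calc ∑ A : Finset α, μ A * (g ∅ - ∑ e ∈ A, y e)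
        = ∑ A : Finset α, (μ A * g ∅ - μ A * ∑ e ∈ A, y e) := by
          refine Finset.sum_congr rfl fun A _ => ?_
          ring
      _ = (∑ A : Finset α, μ A) * g ∅ - ∑ A : Finset α, μ A * ∑ e ∈ A, y e := by
          rw [Finset.sum_sub_distrib, Finset.sum_mul]
      _ = g ∅ - ∑ A : Finset α, ∑ e : α, y e * (if e ∈ A then μ A else 0) := by
          rw [hμ1, one_mul]
          congr 1
          refine Finset.sum_congr rfl fun A _ => ?_
          rw [h1 A, Finset.mul_sum]
          refine Finset.sum_congr rfl fun e _ => ?_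
          by_cases h : e ∈ A <;> simp [h] <;> ring
      _ = g ∅ - ∑ e : α, y e * ∑ A : Finset α, (if e ∈ A then μ A else 0) := by
          rw [Finset.sum_comm]
          congr 1
          refine Finset.sum_congr rfl fun e _ => ?_
          rw [Finset.mul_sum]
  have marg : ∑ e : α, y e * ∑ A : Finset α, (if e ∈ A then μ A else 0) ≤ p * g ∅ := by
    calc ∑ e : α, y e * ∑ A : Finset α, (if e ∈ A then μ A else 0)
        ≤ ∑ e : α, y e * p :=
          Finset.sum_le_sum fun e _ => mul_le_mul_of_nonneg_left (hmarg e) (hy0 e)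
      _ = (∑ e : α, y e) * p := by rw [Finset.sum_mul]
      _ ≤ g ∅ * p := mul_le_mul_of_nonneg_right hysum hp0
      _ = p * g ∅ := mul_comm _ _
  rw [expand] at step1
  linarith
end

section
/- In the matching OCRS: let G = (V, E) be a graph, b ∈ [0,1], and x ∈ [0,1]^E with Σ_{g ∈ δ(u)} x_g ≤ b for every vertex u. Let each edge g independently be in A with probability x_g and in K with probability (1 - e^{-x_g})/x_g (interpreting this ratio as 1 when x_g = 0). Then for every edge g' = uv: Pr[g' ∈ K and A ∩ K ∩ ((δ(u) ∪ δ(v)) \ {g'}) = ∅] ≥ e^{-2b}. -/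
open Classical in
/-- The set `δ(u)` of edges incident to the vertex `u`, for a graph whose edges are
given by their two endpoint maps `fst`, `snd`. -/
noncomputable def delta {V E : Type*} [Fintype E]
    (fst snd : E → V) (u : V) : Finset E :=
  Finset.univ.filter (fun g => fst g = u ∨ snd g = u)

section Independence

variable {E : Type*} [Fintype E] [DecidableEq E]

theorem sum_setProb_mul_prod (x : E → ℝ) (φ : E → Prop → ℝ) :
    ∑ A : Finset E, setProb x A * ∏ e, φ e (e ∈ A) =
      ∏ e, (x e * φ e True + (1 - x e) * φ e False) := by
  unfold setProb
  rw [Finset.prod_add, Finset.powerset_univ]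
  refine Finset.sum_congr rfl fun A _ => ?_
  have hin : ∏ e ∈ A, φ e (e ∈ A) = ∏ e ∈ A, φ e True :=
    Finset.prod_congr rfl fun e he => by rw [eq_true he]
  have hout : ∏ e ∈ Aᶜ, φ e (e ∈ A) = ∏ e ∈ Aᶜ, φ e False :=
    Finset.prod_congr rfl fun e he => by rw [eq_false (Finset.mem_compl.mp he)]
  rw [← Finset.prod_mul_prod_compl A, hin, hout, ← Finset.compl_eq_univ_sdiff,
    Finset.prod_mul_distrib, Finset.prod_mul_distrib]
  ring

theorem sum_sum_setProb_mul_prod (p q : E → ℝ) (φ : E → Prop → Prop → ℝ) :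
    ∑ A : Finset E, ∑ K : Finset E, setProb p A * setProb q K * ∏ e, φ e (e ∈ A) (e ∈ K) =
      ∏ e, (p e * (q e * φ e True True + (1 - q e) * φ e True False) +
        (1 - p e) * (q e * φ e False True + (1 - q e) * φ e False False)) := by
  rw [← sum_setProb_mul_prod p fun e a => q e * φ e a True + (1 - q e) * φ e a False]
  refine Finset.sum_congr rfl fun A _ => ?_
  simp_rw [mul_assoc, ← Finset.mul_sum]
  rw [sum_setProb_mul_prod q fun e k => φ e (e ∈ A) k]

theorem sum_sum_setProb_mul_ite_mem_and_inter_eq_empty (p q : E → ℝ) {S : Finset E} {g : E}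
    (hg : g ∉ S) :
    ∑ A : Finset E, ∑ K : Finset E,
        setProb p A * setProb q K * (if g ∈ K ∧ A ∩ K ∩ S = ∅ then (1 : ℝ) else 0) =
      q g * ∏ e ∈ S, (1 - p e * q e) := by
  classical
  let φ : E → Prop → Prop → ℝ := fun e a k =>
    if (e = g → k) ∧ (e ∈ S → ¬(a ∧ k)) then 1 else 0
  have hind : ∀ A K : Finset E,
      (if g ∈ K ∧ A ∩ K ∩ S = ∅ then (1 : ℝ) else 0) = ∏ e, φ e (e ∈ A) (e ∈ K) := by
    intro A K
    simp only [φ]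
    convert (Fintype.prod_boole (M₀ := ℝ)
      (p := fun e => (e = g → e ∈ K) ∧ (e ∈ S → ¬(e ∈ A ∧ e ∈ K)))).symm using 3
    simp only [Finset.eq_empty_iff_forall_notMem, Finset.mem_inter, forall_and, forall_eq]
    exact and_congr_right fun _ => forall_congr' fun e => by tauto
  have hedge : ∀ e, p e * (q e * φ e True True + (1 - q e) * φ e True False) +
        (1 - p e) * (q e * φ e False True + (1 - q e) * φ e False False) =
      if e = g then q e else if e ∈ S then 1 - p e * q e else 1 := by
    intro e
    by_cases hge : e = g
    · subst hge
      simp only [φ, hg, not_and, imp_self, not_true_eq_false, imp_false, and_self, ↓reduceIte,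
        mul_one, not_false_eq_true, implies_true, and_true, mul_zero, add_zero]
      ring
    · by_cases heS : e ∈ S
      · simp only [φ, hge, heS, not_and, implies_true, not_true_eq_false, imp_false, and_false,
          ↓reduceIte, mul_zero, not_false_eq_true, and_self, mul_one, zero_add,
          add_sub_cancel]
        ring
      · simp [φ, hge, heS]
  simp_rw [hind]
  rw [sum_sum_setProb_mul_prod, Fintype.prod_congr _ _ hedge,
    ← Finset.mul_prod_erase Finset.univ _ (Finset.mem_univ g), if_pos rfl]
  congr 1
  rw [Finset.prod_congr rfl fun e he => if_neg (Finset.ne_of_mem_erase he), Finset.prod_ite_mem,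
    Finset.erase_inter, Finset.univ_inter, Finset.erase_eq_of_notMem hg]

end Independence

noncomputable def keepProb (t : ℝ) : ℝ :=
  if t = 0 then 1 else (1 - Real.exp (-t)) / t

theorem one_sub_mul_keepProb (t : ℝ) : 1 - t * keepProb t = Real.exp (-t) := by
  rcases eq_or_ne t 0 with rfl | ht
  · simp
  · rw [keepProb, if_neg ht, mul_div_cancel₀ _ ht]
    ring

theorem exp_neg_le_keepProb {t : ℝ} (ht : 0 ≤ t) : Real.exp (-t) ≤ keepProb t := by
  rcases ht.eq_or_lt with rfl | ht
  · simp [keepProb]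
  · rw [keepProb, if_neg ht.ne', le_div_iff₀ ht]
    have h : (t + 1) * Real.exp (-t) ≤ 1 := by
      calc (t + 1) * Real.exp (-t) ≤ Real.exp t * Real.exp (-t) :=
            mul_le_mul_of_nonneg_right (Real.add_one_le_exp t) (Real.exp_pos _).le
        _ = 1 := by rw [← Real.exp_add, add_neg_cancel, Real.exp_zero]
    linarith

theorem Finset.sum_union_sdiff_singleton_add_two_mul_le {E : Type*} [DecidableEq E]
    {x : E → ℝ} {s t : Finset E} {g : E} (hs : g ∈ s) (ht : g ∈ t)
    (hx : ∀ e ∈ s ∩ t, 0 ≤ x e) :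
    ∑ e ∈ (s ∪ t) \ {g}, x e + 2 * x g ≤ ∑ e ∈ s, x e + ∑ e ∈ t, x e := by
  have hinter : x g ≤ ∑ e ∈ s ∩ t, x e :=
    Finset.single_le_sum hx (Finset.mem_inter.mpr ⟨hs, ht⟩)
  have herase : ∑ e ∈ (s ∪ t) \ {g}, x e + x g = ∑ e ∈ s ∪ t, x e := by
    rw [← Finset.erase_eq]
    exact Finset.sum_erase_add _ _ (Finset.mem_union_left t hs)
  linarith [Finset.sum_union_inter (s₁ := s) (s₂ := t) (f := x)]

theorem mem_delta {V E : Type*} [Fintype E] {fst snd : E → V} {u : V} {g : E} :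
    g ∈ delta fst snd u ↔ fst g = u ∨ snd g = u := by
  simp [delta]

open Classical in
theorem stmt13_general {V E : Type*} [Fintype E] [DecidableEq E]
    (fst snd : E → V) (b : ℝ)
    (x : E → ℝ) (hx : ∀ g, x g ∈ Set.Icc (0 : ℝ) 1)
    (hdeg : ∀ u : V, ∑ g ∈ delta fst snd u, x g ≤ b)
    (k : E → ℝ)
    (hk : ∀ g, k g = if x g = 0 then 1 else (1 - Real.exp (-(x g))) / x g)
    (g' : E) :
    Real.exp (-2 * b) ≤
      ∑ A : Finset E, ∑ K : Finset E,
        (setProb x A * setProb k K) *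
          (if g' ∈ K ∧
              A ∩ K ∩ ((delta fst snd (fst g') ∪ delta fst snd (snd g')) \ {g'}) = ∅
            then (1 : ℝ) else 0) := by
  set S := (delta fst snd (fst g') ∪ delta fst snd (snd g')) \ {g'}
  have hS : ∑ e ∈ S, x e ≤ 2 * (b - x g') := by
    have hu : g' ∈ delta fst snd (fst g') := mem_delta.2 (.inl rfl)
    have hv : g' ∈ delta fst snd (snd g') := mem_delta.2 (.inr rfl)
    have := Finset.sum_union_sdiff_singleton_add_two_mul_le hu hv fun e _ => (hx e).1
    linarith [hdeg (fst g'), hdeg (snd g')]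
  have hk' : k = fun g => keepProb (x g) := funext hk
  rw [sum_sum_setProb_mul_ite_mem_and_inter_eq_empty x k
      (Finset.notMem_sdiff_of_mem_right (Finset.mem_singleton_self g')), hk']
  simp only [one_sub_mul_keepProb, ← Real.exp_sum, Finset.sum_neg_distrib]
  calc Real.exp (-2 * b) ≤ Real.exp (-x g') * Real.exp (-∑ e ∈ S, x e) := by
        rw [← Real.exp_add, Real.exp_le_exp]
        linarith [(hx g').1]
    _ ≤ keepProb (x g') * Real.exp (-∑ e ∈ S, x e) :=
        mul_le_mul_of_nonneg_right (exp_neg_le_keepProb (hx g').1) (Real.exp_pos _).le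

open Classical in
/-- in the randomized matching OCRS, with each edge independently in
`A` with probability `x_g` and in `K` with probability `(1 - e^{-x_g})/x_g`, for
every edge `g' = uv`:
`Pr[g' ∈ K and A ∩ K ∩ ((δ(u) ∪ δ(v)) \ {g'}) = ∅] ≥ e^{-2b}`. -/
theorem stmt13 {V E : Type*} [Fintype E] [DecidableEq E]
    (fst snd : E → V) (b : ℝ) (hb : b ∈ Set.Icc (0 : ℝ) 1)
    (x : E → ℝ) (hx : ∀ g, x g ∈ Set.Icc (0 : ℝ) 1)
    (hdeg : ∀ u : V, ∑ g ∈ delta fst snd u, x g ≤ b)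
    (k : E → ℝ)
    (hk : ∀ g, k g = if x g = 0 then 1 else (1 - Real.exp (-(x g))) / x g)
    (g' : E) :
    Real.exp (-2 * b) ≤
      ∑ A : Finset E, ∑ K : Finset E,
        (setProb x A * setProb k K) *
          (if g' ∈ K ∧
              A ∩ K ∩ ((delta fst snd (fst g') ∪ delta fst snd (snd g')) \ {g'}) = ∅
            then (1 : ℝ) else 0) :=
  stmt13_general fst snd b x hx hdeg k hk g'
end

section
/- Let M = (N, F) be a matroid with rank function rank and span spn, b ∈ [0,1], and x ∈ b·P_F (i.e., x(T) ≤ b·rank(T) for all T ⊆ N, x ≥ 0). Then for any distribution μ over subsets of N: Σ_{e∈N} x_e · Pr_{A∼μ}[e ∈ spn(A)] ≤ b · E_{A∼μ}[|A|]. -/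
/-- Span of a set with respect to a (matroid) rank function. -/
def spn {α : Type*} [Fintype α] [DecidableEq α]
    (rank : Finset α → ℕ) (T : Finset α) : Finset α :=
  Finset.univ.filter (fun e => rank (insert e T) = rank T)

lemma rank_union_le {α : Type*} [Fintype α] [DecidableEq α]
    (rank : Finset α → ℕ)
    (hmono : ∀ S T : Finset α, S ⊆ T → rank S ≤ rank T)
    (hsubmod : ∀ S T : Finset α, rank (S ∪ T) + rank (S ∩ T) ≤ rank S + rank T)
    (A : Finset α) (S : Finset α) (hS : ∀ e ∈ S, rank (insert e A) = rank A) :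
    rank (A ∪ S) ≤ rank A := by
  induction S using Finset.induction with
  | empty => simp
  | @insert a S ha ih =>
    have h1 : rank (A ∪ S) ≤ rank A := ih (fun e he => hS e (Finset.mem_insert_of_mem he))
    have h2 : rank (insert a A) = rank A := hS a (Finset.mem_insert_self a S)
    have hsub := hsubmod (A ∪ S) (insert a A)
    have hun : (A ∪ S) ∪ insert a A = A ∪ insert a S := by
      ext e; simp [Finset.mem_union, Finset.mem_insert]; tauto
    have hA : A ⊆ (A ∪ S) ∩ insert a A := by
      intro e he
      simp [Finset.mem_inter, Finset.mem_union, Finset.mem_insert, he]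
    have h3 : rank A ≤ rank ((A ∪ S) ∩ insert a A) := hmono _ _ hA
    rw [hun, h2] at hsub
    omega

lemma rank_spn_le {α : Type*} [Fintype α] [DecidableEq α]
    (rank : Finset α → ℕ)
    (hmono : ∀ S T : Finset α, S ⊆ T → rank S ≤ rank T)
    (hsubmod : ∀ S T : Finset α, rank (S ∪ T) + rank (S ∩ T) ≤ rank S + rank T)
    (A : Finset α) : rank (spn rank A) ≤ rank A := by
  have h := rank_union_le rank hmono hsubmod A (spn rank A)
    (fun e he => (Finset.mem_filter.mp he).2)
  exact le_trans (hmono _ _ Finset.subset_union_right) h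

/-- for a matroid rank function, `b ∈ [0,1]`, `x ∈ b·P_F` and any
distribution `μ` over subsets of the ground set,
`Σ_e x_e · Pr_{A∼μ}[e ∈ spn(A)] ≤ b · E_{A∼μ}[|A|]`. -/
theorem stmt15 {α : Type*} [Fintype α] [DecidableEq α]
    (rank : Finset α → ℕ)
    (hcard : ∀ T : Finset α, rank T ≤ T.card)
    (hmono : ∀ S T : Finset α, S ⊆ T → rank S ≤ rank T)
    (hsubmod : ∀ S T : Finset α, rank (S ∪ T) + rank (S ∩ T) ≤ rank S + rank T)
    (b : ℝ) (hb : b ∈ Set.Icc (0 : ℝ) 1)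
    (x : α → ℝ) (hx0 : ∀ e, 0 ≤ x e)
    (hxP : ∀ T : Finset α, ∑ e ∈ T, x e ≤ b * rank T)
    (μ : Finset α → ℝ) (hμ0 : ∀ A, 0 ≤ μ A) (hμ1 : ∑ A : Finset α, μ A = 1) :
    ∑ e : α, x e * (∑ A : Finset α, μ A * (if e ∈ spn rank A then (1 : ℝ) else 0))
      ≤ b * ∑ A : Finset α, μ A * A.card := by
  have key : ∑ e : α, x e * (∑ A : Finset α, μ A * (if e ∈ spn rank A then (1 : ℝ) else 0))
      = ∑ A : Finset α, μ A * ∑ e ∈ spn rank A, x e := by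
    simp_rw [Finset.mul_sum, Finset.sum_comm (γ := α)]
    congr 1
    ext A
    simp_rw [mul_ite, mul_one, mul_zero, Finset.sum_ite_mem, Finset.univ_inter]
    simp [Finset.mul_sum, mul_comm]

  rw [key, Finset.mul_sum]
  apply Finset.sum_le_sum
  intro A _
  rw [mul_left_comm]
  apply mul_le_mul_of_nonneg_left _ (hμ0 A)
  calc ∑ e ∈ spn rank A, x e ≤ b * rank (spn rank A) := hxP _
    _ ≤ b * A.card := by
        apply mul_le_mul_of_nonneg_left _ hb.1
        exact_mod_cast le_trans (rank_spn_le rank hmono hsubmod A) (hcard A)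
end
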